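/- arXiv:1807.03050 — 2 statements merged into one kernel-verified Lean document; each statement's English description precedes it below -/
import Mathlib

section
/- Let a, b be integers with 0 ≤ b ≤ a − 3 and let β be the unique real root greater than 1 of the polynomial P(X) = X^3 − aX^2 + bX + 1. Then L_⊕(β) ≥ 2; more precisely, there exist x, y ∈ ℤ_β with x + y ∈ fin(β) but β·(x + y) ∉ ℤ_β. -/
/-! `β` is a cubic integer whose conjugates are real, one in `(0, 1)` and one in `(-1, 0)`.
A β-integer has digits in `[0, β)`, so as an element of `ℤ[β]` its conjugates are bounded by
`β / (1 - θ)`, `θ` the larger modulus of the conjugates. For `x, y ∈ ℤ_β` with `x + y ∈ fin(β)`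
the orbit of `|x + y| / β ^ N` under `T_β` is, from time `N` on, confined to the finite set of
elements of `ℤ[β] ∩ [0, 1)` with conjugates bounded by `3 β / (1 - θ)`; hence it reaches `0` a
bounded number of steps after `N` and `L_⊕(β)` is finite. On the other hand
`(a - 1) + 1 = a = β + b / β + 1 / β ^ 2` has two nonzero fractional digits, so neither `a` nor
`β a` is a β-integer and `L_⊕(β) ≥ 2`. -/

open Polynomial

/-- The β-transformation `T_β(x) = βx - ⌊βx⌋`. -/
noncomputable def betaT (β : ℝ) : ℝ → ℝ := fun x => β * x - ⌊β * x⌋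

/-- `fin(β)`: reals `x` such that `|x|/β^N ∈ [0,1)` and the greedy expansion of
`|x|/β^N` is finite, for some `N, n ∈ ℕ`. -/
def finBeta (β : ℝ) : Set ℝ :=
  {x | ∃ N n : ℕ, |x| / β ^ N ∈ Set.Ico (0 : ℝ) 1 ∧ (betaT β)^[n] (|x| / β ^ N) = 0}

/-- `ℤ_β`: the set of β-integers. -/
def betaInt (β : ℝ) : Set ℝ :=
  {x | ∃ N : ℕ, |x| / β ^ N ∈ Set.Ico (0 : ℝ) 1 ∧ (betaT β)^[N] (|x| / β ^ N) = 0}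

/-- `L_⊕(β)`: the least `L ∈ ℕ` such that `β^L·(x+y) ∈ ℤ_β` for all
`x, y ∈ ℤ_β` with `x + y ∈ fin(β)`. -/
noncomputable def Lplus (β : ℝ) : ℕ :=
  sInf {L : ℕ | ∀ x ∈ betaInt β, ∀ y ∈ betaInt β,
    x + y ∈ finBeta β → β ^ L * (x + y) ∈ betaInt β}

/-- `L_⊗(β)`: the least `L ∈ ℕ` such that `β^L·(x·y) ∈ ℤ_β` for all
`x, y ∈ ℤ_β` with `x·y ∈ fin(β)`. -/
noncomputable def Lmul (β : ℝ) : ℕ :=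
  sInf {L : ℕ | ∀ x ∈ betaInt β, ∀ y ∈ betaInt β,
    x * y ∈ finBeta β → β ^ L * (x * y) ∈ betaInt β}

section BetaTransformation

variable {β : ℝ}

lemma betaT_eq_fract (β x : ℝ) : betaT β x = Int.fract (β * x) := rfl

lemma betaT_mem_Ico (β x : ℝ) : betaT β x ∈ Set.Ico (0 : ℝ) 1 :=
  ⟨Int.fract_nonneg _, Int.fract_lt_one _⟩

lemma betaT_div_self (hβ : β ≠ 0) (v : ℝ) : betaT β (v / β) = Int.fract v := by
  rw [betaT_eq_fract, mul_div_cancel₀ _ hβ]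

lemma betaT_zero (β : ℝ) : betaT β 0 = 0 := by simp [betaT]

lemma iterate_betaT_zero (k : ℕ) : (betaT β)^[k] 0 = 0 :=
  Function.iterate_fixed (betaT_zero β) k

lemma iterate_betaT_mem_Ico {u : ℝ} (hu : u ∈ Set.Ico (0 : ℝ) 1) (k : ℕ) :
    (betaT β)^[k] u ∈ Set.Ico (0 : ℝ) 1 := by
  cases k with
  | zero => exact hu
  | succ k => rw [Function.iterate_succ_apply']; exact betaT_mem_Ico β _

lemma iterate_betaT_div_pow (hβ : 1 ≤ β) {v : ℝ} (hv : v ∈ Set.Ico (0 : ℝ) 1) (m : ℕ) :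
    (betaT β)^[m] (v / β ^ m) = v := by
  induction m with
  | zero => simp
  | succ m ih =>
    have hβm : 1 ≤ β ^ m := one_le_pow₀ hβ
    have hv' : v / β ^ m ∈ Set.Ico (0 : ℝ) 1 :=
      ⟨div_nonneg hv.1 (by positivity), (div_le_self hv.1 hβm).trans_lt hv.2⟩
    rw [Function.iterate_succ_apply, pow_succ, ← div_div,
      betaT_div_self (by positivity), Int.fract_eq_self.mpr hv', ih]

lemma abs_pow_mul_div_pow_add (hβ : 0 < β) (w : ℝ) (N L : ℕ) :
    |β ^ L * w| / β ^ (N + L) = |w| / β ^ N := by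
  rw [abs_mul, abs_of_pos (pow_pos hβ L), pow_add]
  field_simp

/-- Raising the exponent `N` only prepends zero digits. -/
lemma mem_betaInt_iff (hβ : 1 ≤ β) {w : ℝ} {N : ℕ} (hw : |w| < β ^ N) :
    w ∈ betaInt β ↔ (betaT β)^[N] (|w| / β ^ N) = 0 := by
  have hβ0 : 0 < β := zero_lt_one.trans_le hβ
  have hmem : |w| / β ^ N ∈ Set.Ico (0 : ℝ) 1 :=
    ⟨by positivity, (div_lt_one (pow_pos hβ0 N)).mpr hw⟩
  refine ⟨fun ⟨M, hM, hT⟩ ↦ ?_, fun h ↦ ⟨N, hmem, h⟩⟩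
  rcases le_total M N with hMN | hNM
  · obtain ⟨m, rfl⟩ := Nat.exists_eq_add_of_le hMN
    rw [pow_add, ← div_div, Function.iterate_add_apply, iterate_betaT_div_pow hβ hM, hT]
  · obtain ⟨m, rfl⟩ := Nat.exists_eq_add_of_le hNM
    rwa [pow_add, ← div_div, Function.iterate_add_apply, iterate_betaT_div_pow hβ hmem] at hT

lemma pow_mul_mem_betaInt (hβ : 0 < β) {w : ℝ} {N : ℕ}
    (hw : |w| / β ^ N ∈ Set.Ico (0 : ℝ) 1) {L : ℕ}
    (hT : (betaT β)^[N + L] (|w| / β ^ N) = 0) : β ^ L * w ∈ betaInt β :=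
  ⟨N + L, by rwa [abs_pow_mul_div_pow_add hβ], by rwa [abs_pow_mul_div_pow_add hβ]⟩

lemma pow_mul_mem_betaInt_of_mem (hβ : 0 < β) {w : ℝ} (hw : w ∈ betaInt β) (L : ℕ) :
    β ^ L * w ∈ betaInt β := by
  obtain ⟨N, hN, hT⟩ := hw
  exact pow_mul_mem_betaInt hβ hN (by
    rw [add_comm, Function.iterate_add_apply, hT, iterate_betaT_zero])

lemma intCast_mem_betaInt (hβ : 0 < β) {d : ℤ} (hd0 : 0 ≤ d) (hdβ : (d : ℝ) < β) :
    (d : ℝ) ∈ betaInt β := by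
  have hd : |(d : ℝ)| = d := abs_of_nonneg (by exact_mod_cast hd0)
  refine ⟨1, ?_, ?_⟩
  · rw [hd, pow_one]
    exact ⟨by positivity, (div_lt_one hβ).mpr hdβ⟩
  · rw [hd, pow_one, Function.iterate_one, betaT_div_self hβ.ne', Int.fract_intCast]

lemma two_le_Lplus (hβ : 0 < β)
    (hfin : ∃ L, ∀ x ∈ betaInt β, ∀ y ∈ betaInt β,
      x + y ∈ finBeta β → β ^ L * (x + y) ∈ betaInt β)
    {x y : ℝ} (hx : x ∈ betaInt β) (hy : y ∈ betaInt β) (hxy : x + y ∈ finBeta β)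
    (hβxy : β * (x + y) ∉ betaInt β) : 2 ≤ Lplus β := by
  refine le_csInf hfin fun L hL ↦ ?_
  by_contra! hL2
  have h := pow_mul_mem_betaInt_of_mem hβ (hL x hx y hy hxy) (1 - L)
  rw [← mul_assoc, ← pow_add, Nat.sub_add_cancel (by omega), pow_one] at h
  exact hβxy h

end BetaTransformation

/-- Before its first visit to `z` the orbit is injective. -/
lemma Function.iterate_add_card_eq_of_forall_mem {α : Type*} {f : α → α} {z : α}
    (hz : f z = z) {s : Finset α} {u : α} {N n : ℕ} (hn : f^[n] u = z)
    (hs : ∀ k, N ≤ k → f^[k] u ∈ s) : f^[N + s.card] u = z := by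
  classical
  have hex : ∃ m, f^[m] u = z := ⟨n, hn⟩
  set m := Nat.find hex
  have hm : f^[m] u = z := Nat.find_spec hex
  have hinj : Set.InjOn (fun k ↦ f^[k] u) (Finset.Ico N m) := by
    intro i hi j hj hij
    by_contra hne
    wlog hlt : i < j generalizing i j
    · exact this hj hi hij.symm (Ne.symm hne) (by omega)
    have hj' : j < m := (Finset.mem_Ico.mp hj).2
    refine Nat.find_min hex (m := m - j + i) (by omega) ?_
    rw [Function.iterate_add_apply, show f^[i] u = f^[j] u from hij,
      ← Function.iterate_add_apply, Nat.sub_add_cancel hj'.le, hm]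
  have hcard := Finset.card_le_card_of_injOn _
    (fun k hk ↦ hs k (Finset.mem_Ico.mp hk).1) hinj
  rw [Nat.card_Ico] at hcard
  rw [show N + s.card = (N + s.card - m) + m by omega, Function.iterate_add_apply, hm,
    Function.iterate_fixed hz]

section CubicIntegers

/-- A triple `c` stands for `c.1 + c.2.1 β + c.2.2 β ^ 2 ∈ ℤ[β]`; evaluating it at another root
`γ` of the minimal polynomial of `β` gives the conjugate of that element. -/
def evalTriple (x : ℝ) : ℤ × ℤ × ℤ →+ ℝ where
  toFun c := c.1 + c.2.1 * x + c.2.2 * x ^ 2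
  map_zero' := by simp
  map_add' c d := by simp only [Prod.fst_add, Prod.snd_add]; push_cast; ring

/-- Multiplication by a root of `X ^ 3 - p X ^ 2 - q X - r`, on coordinates in `1, X, X ^ 2`. -/
def mulRoot (p q r : ℤ) (c : ℤ × ℤ × ℤ) : ℤ × ℤ × ℤ :=
  (r * c.2.2, c.1 + q * c.2.2, c.2.1 + p * c.2.2)

variable {p q r : ℤ} {ρ β γ δ θ C C' : ℝ}

lemma evalTriple_apply (x : ℝ) (c : ℤ × ℤ × ℤ) :
    evalTriple x c = c.1 + c.2.1 * x + c.2.2 * x ^ 2 := rfl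

lemma evalTriple_mulRoot (hρ : ρ ^ 3 = p * ρ ^ 2 + q * ρ + r) (c : ℤ × ℤ × ℤ) :
    evalTriple ρ (mulRoot p q r c) = ρ * evalTriple ρ c := by
  simp only [evalTriple_apply, mulRoot]
  push_cast
  linear_combination -(c.2.2 : ℝ) * hρ

def conjBounded (β γ δ C : ℝ) : Set ℝ :=
  {x | ∃ c, evalTriple β c = x ∧ |evalTriple γ c| ≤ C ∧ |evalTriple δ c| ≤ C}

lemma conjBounded_mono (h : C ≤ C') : conjBounded β γ δ C ⊆ conjBounded β γ δ C' :=
  fun _ ⟨c, hc, hγ, hδ⟩ ↦ ⟨c, hc, hγ.trans h, hδ.trans h⟩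

lemma zero_mem_conjBounded (hC : 0 ≤ C) : (0 : ℝ) ∈ conjBounded β γ δ C :=
  ⟨0, map_zero _, by simpa using hC, by simpa using hC⟩

lemma intCast_mem_conjBounded (d : ℤ) : (d : ℝ) ∈ conjBounded β γ δ |(d : ℝ)| :=
  ⟨(d, 0, 0), by simp [evalTriple_apply], by simp [evalTriple_apply],
    by simp [evalTriple_apply]⟩

lemma neg_mem_conjBounded {x : ℝ} (hx : x ∈ conjBounded β γ δ C) :
    -x ∈ conjBounded β γ δ C := by
  obtain ⟨c, rfl, hγ, hδ⟩ := hx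
  exact ⟨-c, map_neg _ c, by rwa [map_neg, abs_neg], by rwa [map_neg, abs_neg]⟩

lemma abs_mem_conjBounded_iff {x : ℝ} :
    |x| ∈ conjBounded β γ δ C ↔ x ∈ conjBounded β γ δ C := by
  rcases abs_choice x with h | h <;> rw [h]
  exact ⟨fun hx ↦ neg_neg x ▸ neg_mem_conjBounded hx, neg_mem_conjBounded⟩

lemma add_mem_conjBounded {x y : ℝ} (hx : x ∈ conjBounded β γ δ C)
    (hy : y ∈ conjBounded β γ δ C') : x + y ∈ conjBounded β γ δ (C + C') := by
  obtain ⟨c, rfl, hcγ, hcδ⟩ := hx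
  obtain ⟨d, rfl, hdγ, hdδ⟩ := hy
  refine ⟨c + d, map_add _ c d, ?_, ?_⟩ <;> rw [map_add] <;>
    exact (abs_add_le _ _).trans (add_le_add ‹_› ‹_›)

lemma sub_mem_conjBounded {x y : ℝ} (hx : x ∈ conjBounded β γ δ C)
    (hy : y ∈ conjBounded β γ δ C') : x - y ∈ conjBounded β γ δ (C + C') :=
  sub_eq_add_neg x y ▸ add_mem_conjBounded hx (neg_mem_conjBounded hy)

section Roots

variable (hβ : β ^ 3 = p * β ^ 2 + q * β + r) (hγ : γ ^ 3 = p * γ ^ 2 + q * γ + r)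
  (hδ : δ ^ 3 = p * δ ^ 2 + q * δ + r)
include hβ hγ hδ

lemma mul_mem_conjBounded (hγθ : |γ| ≤ θ) (hδθ : |δ| ≤ θ) {x : ℝ}
    (hx : x ∈ conjBounded β γ δ C) : β * x ∈ conjBounded β γ δ (θ * C) := by
  obtain ⟨c, rfl, hcγ, hcδ⟩ := hx
  have hθ : 0 ≤ θ := (abs_nonneg γ).trans hγθ
  refine ⟨mulRoot p q r c, evalTriple_mulRoot hβ c, ?_, ?_⟩
  · rw [evalTriple_mulRoot hγ, abs_mul]
    exact mul_le_mul hγθ hcγ (abs_nonneg _) hθ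
  · rw [evalTriple_mulRoot hδ, abs_mul]
    exact mul_le_mul hδθ hcδ (abs_nonneg _) hθ

lemma pow_mul_mem_conjBounded (hγ1 : |γ| ≤ 1) (hδ1 : |δ| ≤ 1) {x : ℝ}
    (hx : x ∈ conjBounded β γ δ C) (j : ℕ) : β ^ j * x ∈ conjBounded β γ δ C := by
  induction j with
  | zero => simpa using hx
  | succ j ih =>
    simpa [pow_succ', mul_assoc] using mul_mem_conjBounded hβ hγ hδ hγ1 hδ1 ih

end Roots

end CubicIntegers

section Finiteness

variable {β γ δ : ℝ}

lemma finite_setOf_abs_intCast_le (M : ℝ) : {z : ℤ | |(z : ℝ)| ≤ M}.Finite := by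
  refine (Set.finite_Icc (-⌈M⌉) ⌈M⌉).subset fun z hz ↦ ?_
  have hz' := abs_le.mp (hz.trans (Int.le_ceil M))
  exact ⟨by exact_mod_cast hz'.1, by exact_mod_cast hz'.2⟩

lemma abs_le_of_mul_eq {z V A B E s t w K : ℝ} (hV : V ≠ 0)
    (h : z * V = A * s - B * t + E * w) (hA : |A| ≤ K) (hB : |B| ≤ K) (hE : |E| ≤ K) :
    |z| ≤ K * (|s| + |t| + |w|) / |V| := by
  rw [le_div_iff₀ (abs_pos.mpr hV), ← abs_mul, h]
  calc |A * s - B * t + E * w| ≤ |A| * |s| + |B| * |t| + |E| * |w| := by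
        have h₁ := abs_add_le (A * s - B * t) (E * w)
        have h₂ := abs_sub (A * s) (B * t)
        simp only [abs_mul] at h₁ h₂ ⊢
        linarith
    _ ≤ K * (|s| + |t| + |w|) := by
        have := mul_le_mul_of_nonneg_right hA (abs_nonneg s)
        have := mul_le_mul_of_nonneg_right hB (abs_nonneg t)
        have := mul_le_mul_of_nonneg_right hE (abs_nonneg w)
        linarith

/-- The coordinates are recovered from the three conjugates by Cramer's rule for the
Vandermonde matrix of `β, γ, δ`. -/
lemma finite_conjBounded_inter_Icc (hβγ : β ≠ γ) (hβδ : β ≠ δ) (hγδ : γ ≠ δ) (C : ℝ) :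
    (conjBounded β γ δ C ∩ Set.Icc (-C) C).Finite := by
  set V := (β - γ) * (β - δ) * (γ - δ)
  have hV : V ≠ 0 := mul_ne_zero (mul_ne_zero (sub_ne_zero.mpr hβγ) (sub_ne_zero.mpr hβδ))
    (sub_ne_zero.mpr hγδ)
  have hfin := ((finite_setOf_abs_intCast_le
      (C * (|γ * δ * (γ - δ)| + |β * δ * (β - δ)| + |β * γ * (β - γ)|) / |V|)).prod
    ((finite_setOf_abs_intCast_le
      (C * (|δ ^ 2 - γ ^ 2| + |δ ^ 2 - β ^ 2| + |γ ^ 2 - β ^ 2|) / |V|)).prod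
    (finite_setOf_abs_intCast_le (C * (|γ - δ| + |β - δ| + |β - γ|) / |V|)))).image
    (evalTriple β)
  refine hfin.subset ?_
  rintro _ ⟨⟨c, rfl, hcγ, hcδ⟩, hcβ⟩
  have hcβ : |evalTriple β c| ≤ C := abs_le.mpr hcβ
  refine ⟨c, ⟨?_, ?_, ?_⟩, rfl⟩ <;> refine abs_le_of_mul_eq hV ?_ hcβ hcγ hcδ <;>
    simp only [evalTriple_apply, V] <;> ring

end Finiteness

section ConjugateBounds

variable {p q r : ℤ} {β γ δ θ C : ℝ}
  (hβ : β ^ 3 = p * β ^ 2 + q * β + r) (hγ : γ ^ 3 = p * γ ^ 2 + q * γ + r)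
  (hδ : δ ^ 3 = p * δ ^ 2 + q * δ + r)
include hβ hγ hδ

/-- `β ^ K u - T_β^K u = ∑ dᵢ β ^ (K-1-i)` with digits `0 ≤ dᵢ < β`, so its conjugates are
bounded by the geometric series `β ∑ θ ^ j`. -/
lemma pow_mul_sub_iterate_betaT_mem_conjBounded (hβ0 : 0 ≤ β) (hγθ : |γ| ≤ θ)
    (hδθ : |δ| ≤ θ) (hθ : θ < 1) {u : ℝ} (hu : u ∈ Set.Ico (0 : ℝ) 1) (K : ℕ) :
    β ^ K * u - (betaT β)^[K] u ∈ conjBounded β γ δ (β / (1 - θ)) := by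
  have hθ' : 0 < 1 - θ := sub_pos.mpr hθ
  induction K with
  | zero =>
    simpa using zero_mem_conjBounded (div_nonneg hβ0 hθ'.le)
  | succ K ih =>
    set w := (betaT β)^[K] u
    have hw := iterate_betaT_mem_Ico (β := β) hu K
    have hd0 : 0 ≤ ⌊β * w⌋ := Int.floor_nonneg.mpr (mul_nonneg hβ0 hw.1)
    have hdβ : |(⌊β * w⌋ : ℝ)| ≤ β := by
      rw [abs_of_nonneg (by exact_mod_cast hd0)]
      exact (Int.floor_le _).trans (mul_le_of_le_one_right hβ0 hw.2.le)
    have hsplit : β ^ (K + 1) * u - (betaT β)^[K + 1] u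
        = β * (β ^ K * u - w) + (⌊β * w⌋ : ℝ) := by
      rw [Function.iterate_succ_apply', betaT, pow_succ]
      ring
    rw [hsplit]
    refine conjBounded_mono ?_ (add_mem_conjBounded
      (mul_mem_conjBounded hβ hγ hδ hγθ hδθ ih) (intCast_mem_conjBounded _))
    have : θ * (β / (1 - θ)) + β = β / (1 - θ) := by field_simp; ring
    linarith

lemma mem_conjBounded_of_mem_betaInt (hβ1 : 1 < β) (hγθ : |γ| ≤ θ) (hδθ : |δ| ≤ θ)
    (hθ : θ < 1) {x : ℝ} (hx : x ∈ betaInt β) : x ∈ conjBounded β γ δ (β / (1 - θ)) := by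
  obtain ⟨N, hN, hT⟩ := hx
  have h := pow_mul_sub_iterate_betaT_mem_conjBounded hβ hγ hδ (by linarith) hγθ hδθ hθ hN N
  rw [hT, sub_zero, mul_div_cancel₀ _ (by positivity)] at h
  exact abs_mem_conjBounded_iff.mp h

lemma iterate_betaT_mem_conjBounded (hβ1 : 1 < β) (hγθ : |γ| ≤ θ) (hδθ : |δ| ≤ θ)
    (hθ : θ < 1) {z : ℝ} (hz : z ∈ conjBounded β γ δ C) {N k : ℕ}
    (hu : |z| / β ^ N ∈ Set.Ico (0 : ℝ) 1) (hk : N ≤ k) :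
    (betaT β)^[k] (|z| / β ^ N) ∈ conjBounded β γ δ (C + β / (1 - θ)) := by
  have hshift : (betaT β)^[k] (|z| / β ^ N)
      = β ^ (k - N) * |z| - (β ^ k * (|z| / β ^ N) - (betaT β)^[k] (|z| / β ^ N)) := by
    rw [← Nat.sub_add_cancel hk, pow_add, Nat.add_sub_cancel]
    field_simp
    ring
  rw [hshift]
  exact sub_mem_conjBounded
    (pow_mul_mem_conjBounded hβ hγ hδ (by linarith) (by linarith)
      (abs_mem_conjBounded_iff.mpr hz) _)
    (pow_mul_sub_iterate_betaT_mem_conjBounded hβ hγ hδ (by linarith) hγθ hδθ hθ hu k)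

theorem exists_forall_pow_mul_add_mem_betaInt (hβ1 : 1 < β) (hγ1 : |γ| < 1) (hδ1 : |δ| < 1)
    (hγδ : γ ≠ δ) :
    ∃ L : ℕ, ∀ x ∈ betaInt β, ∀ y ∈ betaInt β,
      x + y ∈ finBeta β → β ^ L * (x + y) ∈ betaInt β := by
  set θ := max |γ| |δ|
  set D := β / (1 - θ)
  have hθ : θ < 1 := max_lt hγ1 hδ1
  have hγθ : |γ| ≤ θ := le_max_left _ _
  have hδθ : |δ| ≤ θ := le_max_right _ _
  have hβD : β ≤ D := le_div_self (by linarith) (by linarith) (by linarith [abs_nonneg γ])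
  have hF := finite_conjBounded_inter_Icc (β := β) (γ := γ) (δ := δ)
    (by intro h; rw [← h, abs_of_pos (by linarith)] at hγ1; linarith)
    (by intro h; rw [← h, abs_of_pos (by linarith)] at hδ1; linarith) hγδ (D + D + D)
  refine ⟨hF.toFinset.card, fun x hx y hy ⟨N, n, hu, hn⟩ ↦ pow_mul_mem_betaInt (by linarith) hu
    (Function.iterate_add_card_eq_of_forall_mem (betaT_zero β) hn fun k hk ↦ ?_)⟩
  have hxy := add_mem_conjBounded (mem_conjBounded_of_mem_betaInt hβ hγ hδ hβ1 hγθ hδθ hθ hx)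
    (mem_conjBounded_of_mem_betaInt hβ hγ hδ hβ1 hγθ hδθ hθ hy)
  have hIco := iterate_betaT_mem_Ico (β := β) hu k
  exact hF.mem_toFinset.mpr ⟨iterate_betaT_mem_conjBounded hβ hγ hδ hβ1 hγθ hδθ hθ hxy hu hk,
    ⟨by linarith [hIco.1], by linarith [hIco.2]⟩⟩

end ConjugateBounds

section Cubic

variable {a b : ℤ} {β : ℝ}

lemma cubic_root_mem_Ioo (hb0 : 0 ≤ b) (hba : b ≤ a - 3) (hβ : 1 < β)
    (hroot : β ^ 3 - (a : ℝ) * β ^ 2 + (b : ℝ) * β + 1 = 0) : β ∈ Set.Ioo ((a : ℝ) - 1) a := by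
  have hb0' : (0 : ℝ) ≤ b := by exact_mod_cast hb0
  have hba' : (b : ℝ) ≤ a - 3 := by exact_mod_cast hba
  refine ⟨?_, by nlinarith⟩
  by_contra! h
  nlinarith [mul_nonneg (by linarith : (0 : ℝ) ≤ a - β - 1)
    (mul_nonneg (by linarith : (0 : ℝ) ≤ β) (by linarith : (0 : ℝ) ≤ β - 1))]

lemma exists_cubic_roots_mem_Ioo (hb0 : 0 ≤ b) (hba : b ≤ a - 3) :
    (∃ γ ∈ Set.Ioo (0 : ℝ) 1, γ ^ 3 - (a : ℝ) * γ ^ 2 + (b : ℝ) * γ + 1 = 0) ∧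
    ∃ δ ∈ Set.Ioo (-1 : ℝ) 0, δ ^ 3 - (a : ℝ) * δ ^ 2 + (b : ℝ) * δ + 1 = 0 := by
  have hb0' : (0 : ℝ) ≤ b := by exact_mod_cast hb0
  have hba' : (b : ℝ) ≤ a - 3 := by exact_mod_cast hba
  have hf : Continuous fun x : ℝ ↦ x ^ 3 - (a : ℝ) * x ^ 2 + (b : ℝ) * x + 1 := by fun_prop
  constructor
  · exact intermediate_value_Ioo' zero_le_one hf.continuousOn ⟨by norm_num; linarith, by norm_num⟩
  · exact intermediate_value_Ioo (by norm_num) hf.continuousOn ⟨by norm_num; linarith, by norm_num⟩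

/-- `a = β + b / β + 1 / β ^ 2`, read off from `β (a - β) = b + 1 / β`. -/
lemma iterate_betaT_intCast_div_sq (hβ : 1 < β) (haβ : (a : ℝ) - 1 < β)
    (hβa : β < a) (hroot : β ^ 3 - (a : ℝ) * β ^ 2 + (b : ℝ) * β + 1 = 0) :
    (betaT β)^[3] (a / β ^ 2) = 1 / β ∧ (betaT β)^[4] (a / β ^ 2) = 0 := by
  have hβ0 : β ≠ 0 := by positivity
  have h₁ : betaT β (a / β ^ 2) = (a - β) / β := by
    have hfl : ⌊(a : ℝ) / β⌋ = 1 := by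
      rw [Int.floor_eq_iff, le_div_iff₀ (by positivity), div_lt_iff₀ (by positivity)]
      constructor <;> push_cast <;> linarith
    rw [sq, ← div_div, betaT_div_self hβ0, Int.fract, hfl]
    field_simp
    push_cast
    ring
  have h₂ : betaT β ((a - β) / β) = (b + 1 / β) / β := by
    rw [betaT_div_self hβ0, Int.fract_eq_self.mpr ⟨by linarith, by linarith⟩]
    field_simp
    linear_combination -hroot
  have h₃ : betaT β ((b + 1 / β) / β) = 1 / β := by
    rw [betaT_div_self hβ0, Int.fract_intCast_add,
      Int.fract_eq_self.mpr ⟨by positivity, (div_lt_one (by positivity)).mpr hβ⟩]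
  have h₄ : betaT β (1 / β) = 0 := by
    rw [betaT_div_self hβ0, Int.fract_one]
  have h₃' : (betaT β)^[3] (a / β ^ 2) = 1 / β := by
    simp only [Function.iterate_succ_apply', Function.iterate_zero_apply, h₁, h₂, h₃]
  refine ⟨h₃', ?_⟩
  rw [Function.iterate_succ_apply', h₃', h₄]

lemma exists_add_mem_finBeta_mul_not_mem_betaInt (ha : 3 ≤ a) (hβ : 1 < β)
    (haβ : (a : ℝ) - 1 < β) (hβa : β < a)
    (hroot : β ^ 3 - (a : ℝ) * β ^ 2 + (b : ℝ) * β + 1 = 0) :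
    ∃ x ∈ betaInt β, ∃ y ∈ betaInt β, x + y ∈ finBeta β ∧ β * (x + y) ∉ betaInt β := by
  have hβ0 : 0 < β := by linarith
  have ha' : (3 : ℝ) ≤ a := by exact_mod_cast ha
  have haβ2 : (a : ℝ) < β ^ 2 := by nlinarith
  have hsum : ((a - 1 : ℤ) : ℝ) + ((1 : ℤ) : ℝ) = a := by push_cast; ring
  obtain ⟨h₃, h₄⟩ := iterate_betaT_intCast_div_sq hβ haβ hβa hroot
  refine ⟨_, intCast_mem_betaInt (d := a - 1) hβ0 (by omega) (by push_cast; linarith),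
    _, intCast_mem_betaInt (d := 1) hβ0 zero_le_one (by push_cast; linarith), ?_⟩
  rw [hsum]
  constructor
  · refine ⟨2, 4, ?_, ?_⟩ <;> rw [abs_of_pos (by linarith)]
    exacts [⟨by positivity, (div_lt_one (by positivity)).mpr haβ2⟩, h₄]
  · have hβa_pos : 0 < β * a := by positivity
    rw [mem_betaInt_iff hβ.le (N := 3) (by rw [abs_of_pos hβa_pos]; nlinarith),
      abs_of_pos hβa_pos, show β * a / β ^ 3 = a / β ^ 2 by field_simp, h₃]
    positivity

end Cubic

theorem stmt16 (a b : ℤ) (hb0 : 0 ≤ b) (hba : b ≤ a - 3) (β : ℝ) (hβ : 1 < β)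
    (hroot : β ^ 3 - (a : ℝ) * β ^ 2 + (b : ℝ) * β + 1 = 0) :
    2 ≤ Lplus β ∧
    ∃ x ∈ betaInt β, ∃ y ∈ betaInt β,
      x + y ∈ finBeta β ∧ β * (x + y) ∉ betaInt β := by
  obtain ⟨haβ, hβa⟩ := cubic_root_mem_Ioo hb0 hba hβ hroot
  obtain ⟨⟨γ, hγ, hγroot⟩, δ, hδ, hδroot⟩ := exists_cubic_roots_mem_Ioo hb0 hba
  have hfin := exists_forall_pow_mul_add_mem_betaInt (p := a) (q := -b) (r := -1)
    (by push_cast; linarith) (by push_cast; linarith) (by push_cast; linarith) hβ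
    (abs_lt.mpr ⟨by linarith [hγ.1], hγ.2⟩) (abs_lt.mpr ⟨hδ.1, by linarith [hδ.2]⟩)
    (ne_of_gt (hδ.2.trans hγ.1))
  obtain ⟨x, hx, y, hy, hxy, hβxy⟩ :=
    exists_add_mem_finBeta_mul_not_mem_betaInt (by omega) hβ haβ hβa hroot
  exact ⟨two_le_Lplus (by linarith) hfin hx hy hxy hβxy, x, hx, y, hy, hxy, hβxy⟩
end

section
/- Let a, b be integers with 0 ≤ b ≤ a − 3 and suppose the polynomial P(X) = X^3 − aX^2 + bX + 1 has three real roots β, β', β'' with β > 1, 0 < β' < 1 and −1 < β'' < 0. Then β' ≤ (b + √(a−1) + 2/√(a−1)) / (a−1). -/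
open Polynomial

/-!
Vieta gives `β * β' * (-β'') = 1`. Evaluating the cubic at `a` and at `-1/√(a-1)` (where
`a / (a-1) = 1 + 1/(a-1)` makes it negative) shows `β < a` and `-β'' < 1/√(a-1)`, so
`1/β' = β * (-β'') < a/√(a-1) = √(a-1) + 1/√(a-1)`. Since `β' < 1`, the equation `P(β') = 0`
gives `(a-1) β'^2 ≤ b β' + 1`, that is `(a-1) β' ≤ b + 1/β'`.
-/
theorem lt_of_mul_sub_mul_sub_pos {x r r' r'' : ℝ} (h' : r' < x) (h'' : r'' < x)
    (h : 0 < (x - r) * (x - r') * (x - r'')) : r < x := by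
  by_contra! hle
  have : (x - r) * ((x - r') * (x - r'')) ≤ 0 :=
    mul_nonpos_of_nonpos_of_nonneg (by linarith) (by nlinarith)
  linarith [mul_assoc (x - r) (x - r') (x - r'')]

theorem lt_of_mul_sub_mul_sub_neg {x r r' r'' : ℝ} (h : x < r) (h' : x < r')
    (hneg : (x - r) * (x - r') * (x - r'') < 0) : x < r'' := by
  by_contra! hle
  have : 0 ≤ (x - r) * (x - r') * (x - r'') :=
    mul_nonneg (mul_nonneg_of_nonpos_of_nonpos (by linarith) (by linarith)) (by linarith)
  linarith

section Cubic

variable {a b β β' β'' : ℝ}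
  (hroots : ∀ x : ℝ, x ^ 3 - a * x ^ 2 + b * x + 1 = (x - β) * (x - β') * (x - β''))
include hroots

theorem mul_mul_roots_eq_neg_one : β * β' * β'' = -1 := by
  linarith [hroots 0]

theorem root_lt_of_nonneg (hb : 0 ≤ b) (ha : 0 < a) (h' : β' < a) (h'' : β'' < a) : β < a :=
  lt_of_mul_sub_mul_sub_pos h' h'' <| by
    rw [← hroots]; nlinarith [mul_nonneg ha.le hb]

theorem neg_inv_sqrt_lt_root (hb : 0 ≤ b) (ha : 1 < a) (h : -(√(a - 1))⁻¹ < β)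
    (h' : -(√(a - 1))⁻¹ < β') : -(√(a - 1))⁻¹ < β'' := by
  set u := (√(a - 1))⁻¹
  have hu : 0 < u := by positivity
  have hau : a * u ^ 2 = 1 + u ^ 2 := by
    have : a - 1 ≠ 0 := by linarith
    rw [inv_pow, Real.sq_sqrt (by linarith)]; field_simp; ring
  refine lt_of_mul_sub_mul_sub_neg h h' ?_
  rw [← hroots]; nlinarith [mul_nonneg hu.le hb, pow_pos hu 3]

theorem sub_one_mul_sq_le (h' : β' ≤ 1) : (a - 1) * β' ^ 2 ≤ b * β' + 1 := by
  have hP := hroots β'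
  simp only [sub_self, mul_zero, zero_mul] at hP
  nlinarith [mul_nonneg (sq_nonneg β') (sub_nonneg.2 h')]

theorem one_lt_mul_sqrt_add_inv (ha : 1 < a) (hβ : 0 < β) (hβa : β < a) (hβ' : 0 < β')
    (hβ'' : β'' < 0) (hβ''u : -(√(a - 1))⁻¹ < β'') :
    1 < β' * (√(a - 1) + (√(a - 1))⁻¹) := by
  have hau : a * (√(a - 1))⁻¹ = √(a - 1) + (√(a - 1))⁻¹ := by
    field_simp; rw [Real.sq_sqrt (by linarith)]; ring
  have hlt : β * -β'' < a * (√(a - 1))⁻¹ :=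
    mul_lt_mul'' hβa (by linarith) hβ.le (by linarith)
  calc 1 = β' * (β * -β'') := by linarith [mul_mul_roots_eq_neg_one hroots]
    _ < β' * (√(a - 1) + (√(a - 1))⁻¹) := by rw [← hau]; exact mul_lt_mul_of_pos_left hlt hβ'

theorem middle_root_lt (hb : 0 ≤ b) (ha : 1 < a) (hβ : 0 < β) (hβ'0 : 0 < β') (hβ'1 : β' < 1)
    (hβ'' : β'' < 0) : β' < (b + √(a - 1) + (√(a - 1))⁻¹) / (a - 1) := by
  have hu : 0 < (√(a - 1))⁻¹ := by positivity
  have hβa := root_lt_of_nonneg hroots hb (by linarith) (by linarith) (by linarith)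
  have hβ''u := neg_inv_sqrt_lt_root hroots hb ha (by linarith) (by linarith)
  have hinv := one_lt_mul_sqrt_add_inv hroots ha hβ hβa hβ'0 hβ'' hβ''u
  have hsq := sub_one_mul_sq_le hroots hβ'1.le
  rw [lt_div_iff₀ (by linarith)]
  nlinarith

end Cubic

theorem stmt17 (a b : ℤ) (hb0 : 0 ≤ b) (hba : b ≤ a - 3) (β β' β'' : ℝ)
    (hβ : 1 < β) (hβ' : β' ∈ Set.Ioo (0 : ℝ) 1) (hβ'' : β'' ∈ Set.Ioo (-1 : ℝ) 0)
    (hroots : ∀ x : ℝ, x ^ 3 - (a : ℝ) * x ^ 2 + (b : ℝ) * x + 1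
      = (x - β) * (x - β') * (x - β'')) :
    β' ≤ ((b : ℝ) + Real.sqrt ((a : ℝ) - 1) + 2 / Real.sqrt ((a : ℝ) - 1))
          / ((a : ℝ) - 1) := by
  have hb : (0 : ℝ) ≤ b := by exact_mod_cast hb0
  have ha : (1 : ℝ) < a := by exact_mod_cast (show 1 < a by omega)
  calc β' ≤ (b + √((a : ℝ) - 1) + (√((a : ℝ) - 1))⁻¹) / (a - 1) :=
        (middle_root_lt hroots hb ha (by linarith) hβ'.1 hβ'.2 hβ''.2).le
    _ ≤ _ := by rw [inv_eq_one_div]; gcongr; norm_num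
end
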